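/- Let η : 2πℤ³ → ℝ satisfy |η_r| ≤ C N^κ/‖r‖² for r ≠ 0, and suppose additionally that the H¹ bound ∑_{r} ‖r‖²η_r² ≤ C N^{1+κ} holds. Let P_H = {r : ‖r‖ ≥ N^{1−κ−ε}} with 1−κ−ε > 0. Then ∑_{r ∈ P_H} |η_r|/‖r‖ ≤ C'(N^κ log N + N^κ), i.e. it is bounded by C'' N^κ log N. -/

import Mathlib

open Real

/-- The Euclidean norm of the point `2πp ∈ 2πℤ³` for `p ∈ ℤ³`. -/
noncomputable def lnorm3 (p : Fin 3 → ℤ) : ℝ :=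
  Real.sqrt (∑ i, ((2 * Real.pi) * (p i : ℝ)) ^ 2)

/-- max abs coordinate -/
def mz (p : Fin 3 → ℤ) : ℕ := Finset.univ.sup fun i => (p i).natAbs

lemma mz_le (p : Fin 3 → ℤ) (i : Fin 3) : (p i).natAbs ≤ mz p :=
  Finset.le_sup (f := fun i => (p i).natAbs) (Finset.mem_univ i)

lemma lnorm3_nonneg (p : Fin 3 → ℤ) : 0 ≤ lnorm3 p := Real.sqrt_nonneg _

lemma mz_pos {p : Fin 3 → ℤ} (hp : 0 < lnorm3 p) : 1 ≤ mz p := by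
  by_contra h
  push_neg at h
  have hp0 : p = 0 := by
    funext i
    have := mz_le p i
    have : (p i).natAbs = 0 := by omega
    simpa [Int.natAbs_eq_zero] using this
  rw [hp0] at hp
  simp [lnorm3] at hp

lemma le_lnorm3 (p : Fin 3 → ℤ) : 6 * (mz p : ℝ) ≤ lnorm3 p := by
  obtain ⟨i, -, hi⟩ := Finset.exists_mem_eq_sup Finset.univ
    ⟨0, Finset.mem_univ 0⟩ (fun i => (p i).natAbs)
  have h1 : ((2*Real.pi) * (p i : ℝ))^2 ≤ ∑ j, ((2*Real.pi)*(p j:ℝ))^2 :=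
    Finset.single_le_sum (f := fun j => ((2*Real.pi)*(p j:ℝ))^2) (fun j _ => sq_nonneg _) (Finset.mem_univ i)
  have h2 : Real.sqrt (((2*Real.pi)*(p i:ℝ))^2) ≤ lnorm3 p := Real.sqrt_le_sqrt h1
  rw [Real.sqrt_sq_eq_abs, abs_mul] at h2
  have h3 : |(2*Real.pi)| = 2*Real.pi := abs_of_pos (by positivity)
  have h4 : |((p i):ℝ)| = ((p i).natAbs : ℝ) := by
    rw [Nat.cast_natAbs, Int.cast_abs]
  have h5 : (mz p : ℝ) = ((p i).natAbs : ℝ) := by rw [mz, hi]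
  have hpi := Real.pi_gt_three
  have hnn : (0:ℝ) ≤ ((p i).natAbs : ℝ) := Nat.cast_nonneg _
  rw [h3, h4] at h2
  nlinarith

lemma lnorm3_le (p : Fin 3 → ℤ) : lnorm3 p ≤ 16 * (mz p : ℝ) := by
  have hsq : ∀ j, ((p j : ℝ))^2 ≤ ((mz p : ℝ))^2 := by
    intro j
    have h1 : |((p j):ℝ)| = ((p j).natAbs : ℝ) := by rw [Nat.cast_natAbs, Int.cast_abs]
    have h2 : ((p j).natAbs : ℝ) ≤ (mz p : ℝ) := by exact_mod_cast mz_le p j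
    nlinarith [abs_nonneg ((p j):ℝ), sq_abs ((p j):ℝ)]
  have hpi := Real.pi_le_four
  have hpi0 := Real.pi_pos
  have hpi2 : Real.pi^2 ≤ 16 := by nlinarith
  have t : ∀ j, ((2*Real.pi)*(p j:ℝ))^2 ≤ 64 * ((mz p:ℝ))^2 := by
    intro j
    have h1 := mul_le_mul_of_nonneg_right hpi2 (sq_nonneg ((p j:ℝ)))
    have h2 := hsq j
    nlinarith [sq_nonneg ((p j:ℝ))]
  have key : ∑ j, ((2*Real.pi)*(p j:ℝ))^2 ≤ (16 * (mz p : ℝ))^2 := by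
    rw [Fin.sum_univ_three]
    nlinarith [t 0, t 1, t 2, sq_nonneg ((mz p : ℝ))]
  calc lnorm3 p ≤ Real.sqrt ((16 * (mz p:ℝ))^2) := Real.sqrt_le_sqrt key
    _ = 16 * (mz p : ℝ) := Real.sqrt_sq (by positivity)

noncomputable def box (n : ℕ) : Finset (Fin 3 → ℤ) := Fintype.piFinset fun _ => Finset.Icc (-(n:ℤ)) n

lemma mem_box {p : Fin 3 → ℤ} {n : ℕ} : p ∈ box n ↔ ∀ i, (p i).natAbs ≤ n := by
  simp only [box, Fintype.mem_piFinset, Finset.mem_Icc]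
  exact forall_congr' fun i => by omega

lemma card_box (n : ℕ) : (box n).card = (2*n+1)^3 := by
  rw [box, Fintype.card_piFinset]
  simp only [Int.card_Icc]
  rw [Finset.prod_const, Finset.card_univ, Fintype.card_fin]
  congr 1
  omega

lemma card_fiber (S : Finset (Fin 3 → ℤ)) (n : ℕ) [DecidablePred (fun p => mz p = n + 1)] :
    (S.filter fun p => mz p = n+1).card ≤ 26 * (n+1)^2 := by
  have hsub : (S.filter fun p => mz p = n+1) ⊆ box (n+1) \ box n := by
    intro p hp
    obtain ⟨-, hpn⟩ := Finset.mem_filter.mp hp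
    rw [Finset.mem_sdiff, mem_box, mem_box]
    constructor
    · intro i; have := mz_le p i; omega
    · intro hmem
      have : mz p ≤ n := Finset.sup_le fun i _ => hmem i
      omega
  have hss : box n ⊆ box (n+1) := by
    intro p hp
    rw [mem_box] at hp ⊢
    intro i; have := hp i; omega
  calc (S.filter fun p => mz p = n+1).card ≤ (box (n+1) \ box n).card :=
        Finset.card_le_card hsub
    _ = (box (n+1)).card - (box n).card := Finset.card_sdiff_of_subset hss
    _ = (2*(n+1)+1)^3 - (2*n+1)^3 := by rw [card_box, card_box]
    _ ≤ 26 * (n+1)^2 := by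
        rw [Nat.sub_le_iff_le_add]
        have e1 : (2*(n+1)+1)^3 = 8*n^3+36*n^2+54*n+27 := by ring
        have e2 : 26*(n+1)^2 + (2*n+1)^3 = 8*n^3+38*n^2+58*n+27 := by ring
        rw [e1, e2]
        linarith [Nat.zero_le (n^2), Nat.zero_le n]

lemma harm (a : ℕ) (ha : 1 ≤ a) : ∀ b : ℕ, a ≤ b →
    ∑ n ∈ Finset.Icc a b, ((n:ℝ))⁻¹ ≤ 1 + Real.log b - Real.log a := by
  intro b hb
  induction b, hb using Nat.le_induction with
  | base =>
      rw [Finset.Icc_self, Finset.sum_singleton]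
      have h1 : (1:ℝ) ≤ (a:ℝ) := by exact_mod_cast ha
      have : ((a:ℝ))⁻¹ ≤ 1 := by
        rw [inv_le_one_iff₀]; right; exact h1
      linarith
  | succ b hb ih =>
      rw [Finset.sum_Icc_succ_top (by omega)]
      have hb1 : (1:ℝ) ≤ (b:ℝ) := by exact_mod_cast le_trans ha hb
      have h0 : (0:ℝ) < (b:ℝ) := by linarith
      have h1 : (0:ℝ) < (b:ℝ)+1 := by linarith
      have hlog := Real.log_le_sub_one_of_pos (show (0:ℝ) < (b:ℝ)/((b:ℝ)+1) by positivity)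
      rw [Real.log_div (ne_of_gt h0) (ne_of_gt h1)] at hlog
      have he : (b:ℝ)/((b:ℝ)+1) - 1 = -(((b:ℝ)+1))⁻¹ := by field_simp; ring
      rw [he] at hlog
      have hkey : (((b:ℝ)+1))⁻¹ ≤ Real.log ((b:ℝ)+1) - Real.log b := by linarith
      push_cast
      linarith

lemma tailsum (a : ℕ) (ha : 1 ≤ a) : ∀ b : ℕ, a ≤ b →
    ∑ n ∈ Finset.Icc a b, (((n:ℝ))^2)⁻¹ ≤ 2/(a:ℝ) - 1/(b:ℝ) := by
  intro b hb
  induction b, hb using Nat.le_induction with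
  | base =>
      rw [Finset.Icc_self, Finset.sum_singleton]
      have h1 : (1:ℝ) ≤ (a:ℝ) := by exact_mod_cast ha
      have h0 : (0:ℝ) < (a:ℝ) := by linarith
      rw [show (2:ℝ)/(a:ℝ) - 1/(a:ℝ) = 1/(a:ℝ) by ring]
      rw [inv_eq_one_div]
      rw [div_le_div_iff₀ (by positivity) h0]
      nlinarith
  | succ b hb ih =>
      rw [Finset.sum_Icc_succ_top (by omega)]
      have hb1 : (1:ℝ) ≤ (b:ℝ) := by exact_mod_cast le_trans ha hb
      have h0 : (0:ℝ) < (b:ℝ) := by linarith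
      have h1 : (0:ℝ) < (b:ℝ)+1 := by linarith
      have key : (((b:ℝ)+1)^2)⁻¹ + 1/((b:ℝ)+1) ≤ 1/(b:ℝ) := by
        rw [inv_eq_one_div]
        rw [div_add_div _ _ (by positivity) (by positivity), div_le_div_iff₀ (by positivity) h0]
        nlinarith
      push_cast
      linarith

lemma sum_shell (S : Finset (Fin 3 → ℤ)) (f : (Fin 3 → ℤ) → ℝ) (g : ℕ → ℝ)
    (hg : ∀ n, 0 ≤ g n)
    (hS : ∀ p ∈ S, 1 ≤ mz p)
    (hfg : ∀ p ∈ S, f p ≤ g (mz p)) (a b : ℕ)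
    (hab : ∀ p ∈ S, a ≤ mz p ∧ mz p ≤ b) :
    ∑ p ∈ S, f p ≤ ∑ n ∈ Finset.Icc a b, 26 * (n:ℝ)^2 * g n := by
  classical
  rw [← Finset.sum_fiberwise_of_maps_to (g := mz) (t := Finset.Icc a b)
    (fun p hp => Finset.mem_Icc.mpr (hab p hp)) f]
  apply Finset.sum_le_sum
  intro n hn
  by_cases hne : (S.filter fun p => mz p = n).Nonempty
  · obtain ⟨p0, hp0⟩ := hne
    obtain ⟨hp0S, hp0n⟩ := Finset.mem_filter.mp hp0
    have hn1 : 1 ≤ n := hp0n ▸ hS p0 hp0S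
    obtain ⟨k, rfl⟩ : ∃ k, n = k+1 := ⟨n-1, by omega⟩
    calc ∑ p ∈ S.filter (fun p => mz p = k+1), f p
        ≤ ∑ p ∈ S.filter (fun p => mz p = k+1), g (k+1) := by
          apply Finset.sum_le_sum
          intro p hp
          obtain ⟨hpS, hpn⟩ := Finset.mem_filter.mp hp
          exact hpn ▸ hfg p hpS
      _ = ((S.filter fun p => mz p = k+1).card : ℝ) * g (k+1) := by
          rw [Finset.sum_const, nsmul_eq_mul]
      _ ≤ (26 * ((k:ℝ)+1)^2) * g (k+1) := by
          apply mul_le_mul_of_nonneg_right _ (hg _)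
          have := card_fiber S k
          calc ((S.filter fun p => mz p = k+1).card : ℝ) ≤ ((26 * (k+1)^2 : ℕ) : ℝ) := by
                exact_mod_cast this
            _ = 26 * ((k:ℝ)+1)^2 := by push_cast; ring
      _ = 26 * (((k:ℕ)+1 : ℕ):ℝ)^2 * g (k+1) := by push_cast; ring
  · rw [Finset.not_nonempty_iff_eq_empty] at hne
    rw [hne, Finset.sum_empty]
    have : (0:ℝ) ≤ (n:ℝ)^2 := sq_nonneg _
    have := hg n
    positivity

set_option maxHeartbeats 2000000 in
/-- under the pointwise bound `|η_r| ≤ C N^κ/‖r‖²` and the H¹ bound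
`∑ ‖r‖² η_r² ≤ C N^{1+κ}`, on `P_H = {‖r‖ ≥ N^{1−κ−ε}}` one has
`∑_{r ∈ P_H} |η_r|/‖r‖ ≤ C'' N^κ log N`. -/
theorem stmt_14 (C : ℝ) (hC : 0 < C) :
    ∃ C'' > (0:ℝ), ∀ (N κ ε : ℝ) (η : (Fin 3 → ℤ) → ℝ),
      2 ≤ N → 0 < κ → κ < 1 → 0 < ε → 0 < 1 - κ - ε →
      (∀ r : Fin 3 → ℤ, r ≠ 0 → |η r| ≤ C * N ^ κ / lnorm3 r ^ 2) →
      Summable (fun r : Fin 3 → ℤ => lnorm3 r ^ 2 * η r ^ 2) →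
      (∑' r : Fin 3 → ℤ, lnorm3 r ^ 2 * η r ^ 2) ≤ C * N ^ (1 + κ) →
      (∑' r : Fin 3 → ℤ, if N ^ (1 - κ - ε) ≤ lnorm3 r then |η r| / lnorm3 r else 0) ≤
        C'' * N ^ κ * Real.log N := by
  refine ⟨3*C+2, by linarith, ?_⟩
  intro N κ ε η hN hκ hκ1 hε hκε hpt hsum hH1
  classical
  have hN0 : (0:ℝ) < N := by linarith
  have hN1 : (1:ℝ) ≤ N := by linarith
  have hP1 : (1:ℝ) ≤ N ^ κ := Real.one_le_rpow hN1 hκ.le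
  have hP0 : (0:ℝ) < N ^ κ := by linarith
  have hCP0 : (0:ℝ) ≤ C * N ^ κ := mul_nonneg hC.le hP0.le
  have hR1 : (1:ℝ) ≤ N ^ (1-κ-ε) := Real.one_le_rpow hN1 hκε.le
  have hR1pos : (0:ℝ) < N ^ (1-κ-ε) := by linarith
  have hlogR1 : 0 ≤ Real.log (N ^ (1-κ-ε)) := Real.log_nonneg hR1
  have hexphalf : Real.exp (1/2) * Real.exp (1/2) = Real.exp 1 := by
    rw [← Real.exp_add]; norm_num
  have hhalf2 : (1:ℝ)/2 ≤ Real.log 2 := by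
    rw [Real.le_log_iff_exp_le (by norm_num)]
    nlinarith [Real.exp_one_lt_d9, Real.exp_pos ((1:ℝ)/2), hexphalf]
  have hL : (1:ℝ)/2 ≤ Real.log N := le_trans hhalf2 (Real.log_le_log (by norm_num) hN)
  have hL0 : (0:ℝ) ≤ Real.log N := by linarith
  have hexp3 : Real.exp 3 = Real.exp 1 * Real.exp 1 * Real.exp 1 := by
    rw [← Real.exp_add, ← Real.exp_add]; norm_num
  have hlog16 : Real.log 16 ≤ 3 := by
    rw [Real.log_le_iff_le_exp (by norm_num)]
    nlinarith [Real.exp_one_gt_d9, hexp3]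
  apply tsum_le_of_sum_le'
    (by nlinarith)
  intro S
  -- three bounds
  have hhi1bound : ∑ r ∈ S, lnorm3 r ^2 * η r^2 / (2*N) ≤ C/2 * N^κ := by
    rw [← Finset.sum_div]
    have h1 : ∑ r ∈ S, lnorm3 r^2*η r^2 ≤ C * N^(1+κ) :=
      le_trans (Summable.sum_le_tsum S (fun r _ => by positivity) hsum) hH1
    have h2 : C * N^(1+κ) / (2*N) = C/2*N^κ := by
      rw [Real.rpow_add hN0, Real.rpow_one]
      field_simp
    rw [← h2]
    rw [div_le_div_iff₀ (by linarith) (by linarith)]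
    nlinarith [h1]
  have hmidbound : ∑ r ∈ S, (if N^(1-κ-ε) ≤ lnorm3 r ∧ lnorm3 r ≤ N then C*N^κ / lnorm3 r ^ 3 else 0)
      ≤ C*N^κ/8 * (4 + Real.log N) := by
    rw [← Finset.sum_filter]
    set S₁ := S.filter (fun r => N^(1-κ-ε) ≤ lnorm3 r ∧ lnorm3 r ≤ N) with hS₁
    set a := max ⌈N^(1-κ-ε)/16⌉₊ 1 with hadef
    set b := ⌊N⌋₊ with hbdef
    have hmem : ∀ p ∈ S₁, N^(1-κ-ε) ≤ lnorm3 p ∧ lnorm3 p ≤ N := by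
      intro p hp; exact (Finset.mem_filter.mp hp).2
    have hS1pos : ∀ p ∈ S₁, 0 < lnorm3 p := fun p hp => lt_of_lt_of_le hR1pos (hmem p hp).1
    have hSmz : ∀ p ∈ S₁, 1 ≤ mz p := fun p hp => mz_pos (hS1pos p hp)
    have step1 : ∑ p ∈ S₁, C*N^κ / lnorm3 p ^3
        ≤ ∑ n ∈ Finset.Icc a b, 26*(n:ℝ)^2 * (C*N^κ / (6*(n:ℝ))^3) := by
      apply sum_shell S₁ _ (fun n => C*N^κ / (6*(n:ℝ))^3)
        (fun n => div_nonneg hCP0 (by positivity)) hSmz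
      · intro p hp
        have h6 : 6*(mz p:ℝ) ≤ lnorm3 p := le_lnorm3 p
        have hmz1 : (1:ℝ) ≤ (mz p:ℝ) := by exact_mod_cast hSmz p hp
        have hpos : (0:ℝ) < (6*(mz p:ℝ))^3 := by
          apply pow_pos; linarith
        exact div_le_div_of_nonneg_left hCP0 hpos (pow_le_pow_left₀ (by linarith) h6 3)
      · intro p hp
        constructor
        · apply max_le
          · rw [Nat.ceil_le]
            have h16 := lnorm3_le p
            have hlo := (hmem p hp).1
            rw [div_le_iff₀ (by norm_num : (0:ℝ) < 16)]
            linarith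
          · exact hSmz p hp
        · apply Nat.le_floor
          have h6 : 6*(mz p:ℝ) ≤ lnorm3 p := le_lnorm3 p
          have hhi := (hmem p hp).2
          have hmz1 : (1:ℝ) ≤ (mz p:ℝ) := by exact_mod_cast hSmz p hp
          linarith
    have step2 : ∑ n ∈ Finset.Icc a b, 26*(n:ℝ)^2 * (C*N^κ / (6*(n:ℝ))^3)
        ≤ ∑ n ∈ Finset.Icc a b, C*N^κ/8 * ((n:ℝ))⁻¹ := by
      apply Finset.sum_le_sum
      intro n hn
      have hn1 : 1 ≤ n := le_trans (le_max_right _ 1) (Finset.mem_Icc.mp hn).1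
      have hn0 : (0:ℝ) < (n:ℝ) := by exact_mod_cast hn1
      have e1 : 26*(n:ℝ)^2 * (C*N^κ / (6*(n:ℝ))^3) = C*N^κ * (26/(216*(n:ℝ))) := by
        field_simp; ring
      have e2 : C*N^κ/8 * ((n:ℝ))⁻¹ = C*N^κ * (1/(8*(n:ℝ))) := by
        field_simp
      rw [e1, e2]
      apply mul_le_mul_of_nonneg_left _ hCP0
      rw [div_le_div_iff₀ (by linarith) (by linarith)]
      linarith
    have step3 : ∑ n ∈ Finset.Icc a b, ((n:ℝ))⁻¹ ≤ 4 + Real.log N := by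
      rcases le_or_gt a b with hab | hab
      · have h1 := harm a (le_max_right _ 1) b hab
        have hb1 : 1 ≤ b := Nat.le_floor (by exact_mod_cast hN1)
        have hbN : (b:ℝ) ≤ N := Nat.floor_le hN0.le
        have hlogb : Real.log b ≤ Real.log N :=
          Real.log_le_log (by exact_mod_cast hb1) hbN
        have haR : N^(1-κ-ε)/16 ≤ (a:ℝ) := by
          calc N^(1-κ-ε)/16 ≤ (⌈N^(1-κ-ε)/16⌉₊:ℝ) := Nat.le_ceil _
            _ ≤ (a:ℝ) := by exact_mod_cast le_max_left _ 1
        have hloga : Real.log (N^(1-κ-ε)) - Real.log 16 ≤ Real.log a := by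
          rw [← Real.log_div (ne_of_gt hR1pos) (by norm_num)]
          exact Real.log_le_log (by positivity) haR
        linarith
      · rw [Finset.Icc_eq_empty (by omega), Finset.sum_empty]
        linarith
    calc ∑ p ∈ S₁, C*N^κ/lnorm3 p^3 ≤ _ := step1
      _ ≤ _ := step2
      _ = C*N^κ/8 * ∑ n ∈ Finset.Icc a b, ((n:ℝ))⁻¹ := (Finset.mul_sum _ _ _).symm
      _ ≤ C*N^κ/8 * (4 + Real.log N) :=
          mul_le_mul_of_nonneg_left step3 (by linarith)
  have hhi2bound : ∑ r ∈ S, (if N < lnorm3 r then N/(2*lnorm3 r^4) else 0) ≤ 1 := by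
    rw [← Finset.sum_filter]
    set S₂ := S.filter (fun r => N < lnorm3 r) with hS₂
    set a := max ⌈N/16⌉₊ 1 with hadef
    set b := S₂.sup mz with hbdef
    have hmem : ∀ p ∈ S₂, N < lnorm3 p := fun p hp => (Finset.mem_filter.mp hp).2
    have hS2pos : ∀ p ∈ S₂, 0 < lnorm3 p := fun p hp => lt_trans hN0 (hmem p hp)
    have hSmz : ∀ p ∈ S₂, 1 ≤ mz p := fun p hp => mz_pos (hS2pos p hp)
    have ha1 : 1 ≤ a := le_max_right _ 1
    have ha0 : (0:ℝ) < (a:ℝ) := by exact_mod_cast ha1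
    have haN : N/16 ≤ (a:ℝ) := by
      calc N/16 ≤ (⌈N/16⌉₊:ℝ) := Nat.le_ceil _
        _ ≤ (a:ℝ) := by exact_mod_cast le_max_left _ 1
    have step1 : ∑ p ∈ S₂, N/(2*lnorm3 p^4)
        ≤ ∑ n ∈ Finset.Icc a b, 26*(n:ℝ)^2 * (N/(2*(6*(n:ℝ))^4)) := by
      apply sum_shell S₂ _ (fun n => N/(2*(6*(n:ℝ))^4))
        (fun n => div_nonneg hN0.le (by positivity)) hSmz
      · intro p hp
        have h6 : 6*(mz p:ℝ) ≤ lnorm3 p := le_lnorm3 p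
        have hmz1 : (1:ℝ) ≤ (mz p:ℝ) := by exact_mod_cast hSmz p hp
        have hpos : (0:ℝ) < (6*(mz p:ℝ))^4 := by
          apply pow_pos; linarith
        have hle : (6*(mz p:ℝ))^4 ≤ lnorm3 p^4 := pow_le_pow_left₀ (by linarith) h6 4
        have h2pos : (0:ℝ) < 2*(6*(mz p:ℝ))^4 := by linarith
        have h2le : 2*(6*(mz p:ℝ))^4 ≤ 2*lnorm3 p^4 := by linarith
        exact div_le_div_of_nonneg_left hN0.le h2pos h2le
      · intro p hp
        refine ⟨max_le ?_ (hSmz p hp), Finset.le_sup (f := mz) hp⟩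
        rw [Nat.ceil_le]
        have h16 := lnorm3_le p
        have hlo := hmem p hp
        rw [div_le_iff₀ (by norm_num : (0:ℝ) < 16)]
        linarith
    have step2 : ∑ n ∈ Finset.Icc a b, 26*(n:ℝ)^2 * (N/(2*(6*(n:ℝ))^4))
        ≤ ∑ n ∈ Finset.Icc a b, N/80 * (((n:ℝ))^2)⁻¹ := by
      apply Finset.sum_le_sum
      intro n hn
      have hn1 : 1 ≤ n := le_trans (le_max_right _ 1) (Finset.mem_Icc.mp hn).1
      have hn0 : (0:ℝ) < (n:ℝ) := by exact_mod_cast hn1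
      have e1 : 26*(n:ℝ)^2 * (N/(2*(6*(n:ℝ))^4)) = N * (26/(2592*(n:ℝ)^2)) := by
        field_simp; ring
      have e2 : N/80 * (((n:ℝ))^2)⁻¹ = N * (1/(80*(n:ℝ)^2)) := by
        field_simp
      rw [e1, e2]
      apply mul_le_mul_of_nonneg_left _ hN0.le
      rw [div_le_div_iff₀ (by positivity) (by positivity)]
      nlinarith [sq_nonneg (n:ℝ)]
    have step3 : ∑ n ∈ Finset.Icc a b, (((n:ℝ))^2)⁻¹ ≤ 2/(a:ℝ) := by
      rcases le_or_gt a b with hab | hab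
      · have h1 := tailsum a ha1 b hab
        have hb0 : 0 ≤ 1/(b:ℝ) := div_nonneg zero_le_one (Nat.cast_nonneg b)
        linarith
      · rw [Finset.Icc_eq_empty (by omega), Finset.sum_empty]
        positivity
    calc ∑ p ∈ S₂, N/(2*lnorm3 p^4) ≤ _ := step1
      _ ≤ _ := step2
      _ = N/80 * ∑ n ∈ Finset.Icc a b, (((n:ℝ))^2)⁻¹ := (Finset.mul_sum _ _ _).symm
      _ ≤ N/80 * (2/(a:ℝ)) := mul_le_mul_of_nonneg_left step3 (by linarith)
      _ ≤ 1 := by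
          have e3 : N/80*(2/(a:ℝ)) = N/(40*(a:ℝ)) := by field_simp; ring
          rw [e3, div_le_one (by linarith)]
          linarith
  -- termwise bound
  have hkey : ∀ r ∈ S, (if N^(1-κ-ε) ≤ lnorm3 r then |η r| / lnorm3 r else 0) ≤
      (if N^(1-κ-ε) ≤ lnorm3 r ∧ lnorm3 r ≤ N then C*N^κ / lnorm3 r ^ 3 else 0)
      + (lnorm3 r ^2 * η r^2 / (2*N) + (if N < lnorm3 r then N / (2 * lnorm3 r ^ 4) else 0)) := by
    intro r _
    have hhi1nn : 0 ≤ lnorm3 r ^2 * η r^2 / (2*N) := div_nonneg (by positivity) (by linarith)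
    by_cases h1 : N^(1-κ-ε) ≤ lnorm3 r
    · rw [if_pos h1]
      have hr0 : 0 < lnorm3 r := by linarith
      have hrne : r ≠ 0 := by
        intro h
        rw [h] at hr0
        simp [lnorm3] at hr0
      have hη := hpt r hrne
      have h3 : |η r| * lnorm3 r ^2 ≤ C * N^κ := (le_div_iff₀ (pow_pos hr0 2)).mp hη
      by_cases h2 : lnorm3 r ≤ N
      · rw [if_pos ⟨h1, h2⟩, if_neg (not_lt.mpr h2)]
        have hmain : |η r| / lnorm3 r ≤ C*N^κ / lnorm3 r ^3 := by
          rw [div_le_div_iff₀ hr0 (pow_pos hr0 3)]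
          nlinarith [mul_le_mul_of_nonneg_right h3 hr0.le]
        linarith
      · push_neg at h2
        rw [if_neg (fun hc => absurd hc.2 (not_le.mpr h2)), if_pos h2]
        have core' : 2*N*lnorm3 r^3*|η r| ≤ lnorm3 r^6*|η r|^2 + N^2 := by
          nlinarith [sq_nonneg (lnorm3 r^3*|η r| - N)]
        have core : 2*N*lnorm3 r^3*|η r| ≤ lnorm3 r^6*η r^2 + N^2 := by
          rwa [sq_abs] at core'
        have e1 : |η r| / lnorm3 r = (2*N*lnorm3 r^3*|η r|) / (2*N*lnorm3 r^4) := by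
          field_simp
        have e2 : lnorm3 r^2*η r^2/(2*N) + N/(2*lnorm3 r^4)
            = (lnorm3 r^6*η r^2 + N^2)/(2*N*lnorm3 r^4) := by
          field_simp
        rw [e1]
        calc (2*N*lnorm3 r^3*|η r|) / (2*N*lnorm3 r^4)
            ≤ (lnorm3 r^6*η r^2 + N^2)/(2*N*lnorm3 r^4) := by
              have hden : (0:ℝ) < 2*N*lnorm3 r^4 := by
                have := pow_pos hr0 4
                nlinarith
              exact (div_le_div_iff_of_pos_right hden).mpr core
          _ = _ := e2.symm
        linarith
    · rw [if_neg h1]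
      have hm : 0 ≤ (if N^(1-κ-ε) ≤ lnorm3 r ∧ lnorm3 r ≤ N then C*N^κ / lnorm3 r ^ 3 else 0) := by
        split
        · exact div_nonneg hCP0 (pow_nonneg (lnorm3_nonneg r) 3)
        · exact le_refl 0
      have hh : 0 ≤ (if N < lnorm3 r then N / (2 * lnorm3 r ^ 4) else 0) := by
        split
        · have := pow_nonneg (lnorm3_nonneg r) 4
          apply div_nonneg hN0.le
          linarith
        · exact le_refl 0
      linarith
  calc ∑ r ∈ S, (if N^(1-κ-ε) ≤ lnorm3 r then |η r| / lnorm3 r else 0)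
      ≤ ∑ r ∈ S, ((if N^(1-κ-ε) ≤ lnorm3 r ∧ lnorm3 r ≤ N then C*N^κ / lnorm3 r ^ 3 else 0)
        + (lnorm3 r ^2 * η r^2 / (2*N) + (if N < lnorm3 r then N / (2 * lnorm3 r ^ 4) else 0))) :=
        Finset.sum_le_sum hkey
    _ = (∑ r ∈ S, (if N^(1-κ-ε) ≤ lnorm3 r ∧ lnorm3 r ≤ N then C*N^κ / lnorm3 r ^ 3 else 0))
        + ((∑ r ∈ S, lnorm3 r ^2 * η r^2 / (2*N))
          + (∑ r ∈ S, (if N < lnorm3 r then N / (2 * lnorm3 r ^ 4) else 0))) := by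
        rw [Finset.sum_add_distrib, Finset.sum_add_distrib]
    _ ≤ C*N^κ/8 * (4 + Real.log N) + (C/2*N^κ + 1) := by
        have := hmidbound
        have := hhi1bound
        have := hhi2bound
        linarith
    _ ≤ (3*C+2) * N^κ * Real.log N := by
        nlinarith [mul_le_mul_of_nonneg_left hL hCP0,
          mul_le_mul_of_nonneg_left hL (le_trans zero_le_one hP1),
          mul_nonneg hCP0 hL0, hP1, hL, hC]
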